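/- arXiv:2006.01663 — 2 statements merged into one kernel-verified Lean document; each statement's English description precedes it below -/
import Mathlib

section
/- A proper element N of a multiplication lattice L-module M is prime if and only if N is classical prime. -/
open CompleteLattice

universe u v

/-- A multiplicative lattice: a complete lattice with a commutative, associative
multiplication distributing over arbitrary joins, whose greatest element `⊤` is the
multiplicative identity `1`.  Following the standing assumptions of the paper, we also
require that the lattice is compactly generated, that `1` is compact and that finite
products of compact elements are compact. -/
class MultiplicativeLattice (L : Type u) extends CompleteLattice L, CommMonoid L where
  mul_sSup : ∀ (a : L) (S : Set L), a * sSup S = ⨆ b ∈ S, a * b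
  one_eq_top : (1 : L) = ⊤
  compactlyGenerated : ∀ a : L, a = sSup {c : L | IsCompactElement c ∧ c ≤ a}
  top_compact : IsCompactElement (⊤ : L)
  mul_compact : ∀ a b : L, IsCompactElement a → IsCompactElement b →
    IsCompactElement (a * b)

/-- A lattice module `M` over a multiplicative lattice `L`. -/
class LatticeModule (L : Type u) [MultiplicativeLattice L] (M : Type v)
    extends CompleteLattice M, SMul L M where
  sSup_smul : ∀ (S : Set L) (A : M), (SupSet.sSup S : L) • A = ⨆ a ∈ S, a • A
  smul_sSup : ∀ (a : L) (S : Set M), a • (sSup S) = ⨆ B ∈ S, a • B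
  mul_smul : ∀ (a b : L) (A : M), (a * b) • A = a • b • A
  one_smul : ∀ A : M, (1 : L) • A = A
  bot_smul : ∀ A : M, (⊥ : L) • A = (⊥ : M)

section LDefs

variable {L : Type u} [MultiplicativeLattice L]

/-- The residual `(a : b)` in `L`. -/
def lcolon (a b : L) : L := sSup {x : L | x * b ≤ a}

/-- The radical `√a` of an element of `L`. -/
def lrad (a : L) : L :=
  sSup {x : L | IsCompactElement x ∧ ∃ n : ℕ, 0 < n ∧ x ^ n ≤ a}

/-- A prime element of `L`: proper, and `a * b ≤ p` implies `a ≤ p` or `b ≤ p`. -/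
def IsPrimeL (p : L) : Prop :=
  p < 1 ∧ ∀ a b : L, a * b ≤ p → a ≤ p ∨ b ≤ p

/-- A primary element of `L`: proper, and for compact `a, b`, `a * b ≤ q` implies
`a ≤ q` or `b ^ n ≤ q` for some positive `n`. -/
def IsPrimaryL (q : L) : Prop :=
  q < 1 ∧ ∀ a b : L, IsCompactElement a → IsCompactElement b → a * b ≤ q →
    a ≤ q ∨ ∃ n : ℕ, 0 < n ∧ b ^ n ≤ q

/-- A principal element of `L` (meet principal and join principal). -/
def IsPrincipalElemL (e : L) : Prop :=
  (∀ a b : L, a ⊓ b * e = (lcolon a e ⊓ b) * e) ∧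
  (∀ a b : L, lcolon (a * e ⊔ b) e = lcolon b e ⊔ a)

end LDefs

/-- `L` is a PG-lattice: every element is a join of principal elements. -/
def IsPGLattice (L : Type u) [MultiplicativeLattice L] : Prop :=
  ∀ a : L, a = sSup {p : L | IsPrincipalElemL p ∧ p ≤ a}

section MDefs

variable (L : Type u) {M : Type v} [MultiplicativeLattice L] [LatticeModule L M]

/-- The residual `(A : B) ∈ L` of two elements of `M`. -/
def colon (A B : M) : L := sSup {x : L | x • B ≤ A}

/-- The residual `(N : a) ∈ M` of an element of `M` by an element of `L`. -/
def mcolon (N : M) (a : L) : M := sSup {X : M | a • X ≤ N}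

/-- A prime element of `M`. -/
def IsPrimeM (N : M) : Prop :=
  N < ⊤ ∧ ∀ (a : L) (X : M), a • X ≤ N → X ≤ N ∨ a • (⊤ : M) ≤ N

/-- A primary element of `M`. -/
def IsPrimaryM (N : M) : Prop :=
  N < ⊤ ∧ ∀ (a : L) (X : M), a • X ≤ N →
    X ≤ N ∨ ∃ n : ℕ, 0 < n ∧ (a ^ n) • (⊤ : M) ≤ N

/-- The radical `rad N` of an element of `M`: the meet of all prime elements above it. -/
def mrad (N : M) : M := sInf {P : M | IsPrimeM L P ∧ N ≤ P}

/-- A pseudo-primary element of `M`. -/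
def IsPseudoPrimary (N : M) : Prop :=
  N < ⊤ ∧ ∀ (a : L) (X : M), a • X ≤ N → a ≤ colon L N ⊤ ∨ X ≤ mrad L N

/-- A classical prime element of `M`. -/
def IsClassicalPrime (N : M) : Prop :=
  N < ⊤ ∧ ∀ (a b : L) (K : M), (a * b) • K ≤ N → a • K ≤ N ∨ b • K ≤ N

/-- A pseudo-classical primary element of `M`. -/
def IsPseudoClassicalPrimary (N : M) : Prop :=
  N < ⊤ ∧ ∀ (a b : L) (K : M), (a * b) • K ≤ N → a • K ≤ N ∨ b • K ≤ mrad L N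

/-- A principal element of `M` (meet principal and join principal). -/
def IsPrincipalElem (N : M) : Prop :=
  (∀ (b : L) (B : M), (b ⊓ colon L B N) • N = b • N ⊓ B) ∧
  (∀ (b : L) (B : M), b ⊔ colon L B N = colon L (b • N ⊔ B) N)

/-- The saturation `S_p(N)` of `N` with respect to `p`. -/
def saturation (N : M) (p : L) : M :=
  sSup {X : M | ∃ c : L, ¬ c ≤ p ∧ c • X ≤ N}

variable (M)

/-- `M` is a PG-lattice `L`-module. -/
def IsPGModule : Prop := ∀ N : M, N = sSup {P : M | IsPrincipalElem L P ∧ P ≤ N}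

/-- `M` is a multiplication lattice `L`-module. -/
def IsMultiplicationModule : Prop := ∀ N : M, ∃ a : L, N = a • (⊤ : M)

/-- `M` is a faithful `L`-module. -/
def IsFaithful : Prop := colon L (⊥ : M) (⊤ : M) = (⊥ : L)

/-- `M` is a CG (compactly generated) lattice `L`-module. -/
def IsCGModule : Prop := ∀ N : M, N = sSup {K : M | IsCompactElement K ∧ K ≤ N}

end MDefs

section
variable {L : Type u} {M : Type v} [MultiplicativeLattice L] [LatticeModule L M]

lemma latmod_smul_mono_right (a : L) {A B : M} (h : A ≤ B) : a • A ≤ a • B := by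
  have := LatticeModule.smul_sSup a ({A, B} : Set M)
  have hs : sSup ({A, B} : Set M) = B := by
    rw [sSup_pair, sup_eq_right.mpr h]
  rw [hs] at this
  rw [this]
  exact le_iSup₂ (f := fun (X : M) (_ : X ∈ ({A, B} : Set M)) => a • X) A (by simp)
end

theorem stmt16 {L : Type u} {M : Type v} [MultiplicativeLattice L] [LatticeModule L M]
    (hmul : IsMultiplicationModule L M) (N : M) (hN : N < ⊤) :
    IsPrimeM L N ↔ IsClassicalPrime L N := by
  constructor
  · rintro ⟨h1, h2⟩
    refine ⟨hN, fun a b K h => ?_⟩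
    rw [mul_comm, LatticeModule.mul_smul] at h
    rcases h2 b (a • K) h with hl | hr
    · exact Or.inl hl
    · exact Or.inr (le_trans (latmod_smul_mono_right b le_top) hr)
  · rintro ⟨h1, h2⟩
    refine ⟨hN, fun a X h => ?_⟩
    obtain ⟨b, rfl⟩ := hmul X
    rw [← LatticeModule.mul_smul] at h
    rcases h2 a b ⊤ h with hl | hr
    · exact Or.inr hl
    · exact Or.inl hr
end

section
/- Let L be a PG-lattice and M be a faithful multiplication PG-lattice L-module with I_M compact. If a proper element N ∈ M is pseudo-classical primary, then rad(N) is a prime element of M. -/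
open CompleteLattice

universe u v

section ProofDev

variable {L : Type u} {M : Type v} [MultiplicativeLattice L] [LatticeModule L M]

/-! ### Basic lemmas in `L` -/

lemma ml_mul_sup (a b c : L) : a * (b ⊔ c) = a * b ⊔ a * c := by
  rw [← sSup_pair, MultiplicativeLattice.mul_sSup, iSup_pair]

lemma ml_mul_le_mul_left (u : L) {v v' : L} (h : v ≤ v') : u * v ≤ u * v' := by
  have hh : u * v' = u * v ⊔ u * v' := by rw [← ml_mul_sup, sup_eq_right.mpr h]
  exact le_sup_left.trans hh.ge

lemma ml_mul_le_left (a b : L) : a * b ≤ a := by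
  have h : a * (1 : L) = a := mul_one a
  have : a * b ≤ a * 1 := ml_mul_le_mul_left a (by
    rw [MultiplicativeLattice.one_eq_top]; exact le_top)
  rwa [h] at this

lemma ml_mul_le_right (a b : L) : a * b ≤ b := by
  rw [mul_comm]; exact ml_mul_le_left b a

lemma ml_mul_le_mul {u u' v v' : L} (h1 : u ≤ u') (h2 : v ≤ v') : u * v ≤ u' * v' := by
  refine (ml_mul_le_mul_left u h2).trans ?_
  rw [mul_comm u v', mul_comm u' v']
  exact ml_mul_le_mul_left v' h1

lemma ml_sup_mul_sup_le (a c d : L) : (a ⊔ c) * (a ⊔ d) ≤ a ⊔ c * d := by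
  have e : (a ⊔ c) * (a ⊔ d) = ((a ⊔ c) * a) ⊔ ((a ⊔ c) * d) := ml_mul_sup _ _ _
  have h1 : (a ⊔ c) * a ≤ a := ml_mul_le_right _ _
  have h2 : (a ⊔ c) * d ≤ a ⊔ c * d := by
    have e2 : (a ⊔ c) * d = a * d ⊔ c * d := by
      rw [mul_comm, ml_mul_sup, mul_comm d a, mul_comm d c]
    rw [e2]
    exact sup_le ((ml_mul_le_left a d).trans le_sup_left) le_sup_right
  rw [e]
  exact sup_le (h1.trans le_sup_left) h2

lemma ml_le_one (a : L) : a ≤ 1 := by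
  rw [MultiplicativeLattice.one_eq_top]; exact le_top

/-- Power descent along a prime. -/
lemma ml_pow_descent {p x : L} (hp : ∀ u v : L, u * v ≤ p → u ≤ p ∨ v ≤ p) :
    ∀ n : ℕ, 0 < n → x ^ n ≤ p → x ≤ p := by
  intro n
  induction n with
  | zero => intro h; omega
  | succ k ih =>
    intro _ hx
    rw [pow_succ] at hx
    rcases hp _ _ hx with h | h
    · rcases Nat.eq_zero_or_pos k with hk | hk
      · subst hk
        rw [pow_zero] at h
        exact (ml_le_one x).trans h
      · exact ih hk h
    · exact h

lemma ml_pow_compact {z : L} (hz : IsCompactElement z) :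
    ∀ n : ℕ, 0 < n → IsCompactElement (z ^ n) := by
  intro n
  induction n with
  | zero => intro h; omega
  | succ k ih =>
    intro _
    rcases Nat.eq_zero_or_pos k with hk | hk
    · subst hk; simpa [pow_one] using hz
    · rw [pow_succ]
      exact MultiplicativeLattice.mul_compact _ _ (ih hk) hz

/-! ### Basic lemmas in `M` -/

lemma mm_smul_sup (a : L) (B C : M) : a • (B ⊔ C) = a • B ⊔ a • C := by
  rw [← sSup_pair, LatticeModule.smul_sSup, iSup_pair]

lemma mm_sup_smul (a b : L) (C : M) : (a ⊔ b) • C = a • C ⊔ b • C := by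
  rw [← sSup_pair, LatticeModule.sSup_smul, iSup_pair]

lemma mm_smul_mono_left {a b : L} (h : a ≤ b) (C : M) : a • C ≤ b • C := by
  have hh : b • C = a • C ⊔ b • C := by rw [← mm_sup_smul, sup_eq_right.mpr h]
  exact le_sup_left.trans hh.ge

lemma mm_smul_mono_right (a : L) {B C : M} (h : B ≤ C) : a • B ≤ a • C := by
  have hh : a • C = a • B ⊔ a • C := by rw [← mm_smul_sup, sup_eq_right.mpr h]
  exact le_sup_left.trans hh.ge

lemma mm_smul_le_self (a : L) (B : M) : a • B ≤ B := by
  have h : a • B ≤ (1 : L) • B := mm_smul_mono_left (ml_le_one a) B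
  rwa [LatticeModule.one_smul] at h

lemma mm_colon_smul_le (A B : M) : colon L A B • B ≤ A := by
  rw [colon, LatticeModule.sSup_smul]
  exact iSup₂_le fun x hx => hx

lemma mm_le_colon {x : L} {A B : M} (h : x • B ≤ A) : x ≤ colon L A B := le_sSup h

lemma mm_smul_of_le_colon {x : L} {A B : M} (h : x ≤ colon L A B) : x • B ≤ A :=
  (mm_smul_mono_left h B).trans (mm_colon_smul_le A B)

lemma mm_eq_colon_smul (hmul : IsMultiplicationModule L M) (N : M) :
    N = colon L N ⊤ • (⊤ : M) := by
  obtain ⟨c, hc⟩ := hmul N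
  refine le_antisymm ?_ (mm_colon_smul_le N ⊤)
  have hcm : c ≤ colon L N ⊤ := mm_le_colon hc.ge
  calc N = c • ⊤ := hc
    _ ≤ colon L N ⊤ • ⊤ := mm_smul_mono_left hcm ⊤

/-- A prime element of `M` gives a prime residual in `L`. -/
lemma mm_colon_prime {P : M} (hP : IsPrimeM L P) :
    ∀ u v : L, u * v ≤ colon L P ⊤ → u ≤ colon L P ⊤ ∨ v ≤ colon L P ⊤ := by
  intro u v h
  have h2 : (u * v) • (⊤ : M) ≤ P := mm_smul_of_le_colon h
  rw [LatticeModule.mul_smul] at h2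
  rcases hP.2 u (v • ⊤) h2 with h3 | h3
  · right; exact mm_le_colon h3
  · left; exact mm_le_colon h3

/-! ### Radical cancellation -/

lemma ml_pow_card_le (y aa : L) (f : M → L) (s : Finset M) (h : ∀ X ∈ s, y ≤ aa ⊔ f X) :
    y ^ s.card ≤ aa ⊔ ∏ X ∈ s, f X := by
  classical
  induction s using Finset.induction_on with
  | empty =>
    simp only [Finset.card_empty, pow_zero, Finset.prod_empty]
    rw [MultiplicativeLattice.one_eq_top]
    exact le_sup_right
  | @insert X s hXs ih =>
    rw [Finset.card_insert_of_notMem hXs, Finset.prod_insert hXs, pow_succ]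
    have h1 : y ≤ aa ⊔ f X := h X (Finset.mem_insert_self _ _)
    have h2 : y ^ s.card ≤ aa ⊔ ∏ Y ∈ s, f Y :=
      ih fun Y hY => h Y (Finset.mem_insert_of_mem hY)
    calc y ^ s.card * y ≤ (aa ⊔ ∏ Y ∈ s, f Y) * (aa ⊔ f X) := ml_mul_le_mul h2 h1
      _ ≤ aa ⊔ (∏ Y ∈ s, f Y) * f X := ml_sup_mul_sup_le _ _ _
      _ = aa ⊔ f X * ∏ Y ∈ s, f Y := by rw [mul_comm]

/-- Radical cancellation: in a faithful multiplication PG module with compact top,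
`y • ⊤ ≤ a • ⊤` implies `yⁿ ≤ a` for some positive `n`. -/
lemma rcanc (hfaith : IsFaithful L M) (hmul : IsMultiplicationModule L M)
    (hPGM : IsPGModule L M) (hcomp : IsCompactElement (⊤ : M)) (y aa : L)
    (h : y • (⊤ : M) ≤ aa • (⊤ : M)) : ∃ n : ℕ, 0 < n ∧ y ^ n ≤ aa := by
  classical
  obtain ⟨t, hts, htop⟩ := (CompleteLattice.isCompactElement_iff_exists_le_sSup_of_le_sSup M ⊤).mp hcomp _ (le_of_eq (hPGM ⊤))
  set f : M → L := fun X => colon L ⊥ X with hf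
  have key : ∀ X ∈ t, y ≤ aa ⊔ f X := by
    intro X hXt
    obtain ⟨hXpr, -⟩ := hts hXt
    obtain ⟨b, hb⟩ := hmul X
    have comm1 : ∀ w : L, w • X = b • (w • (⊤ : M)) := by
      intro w
      rw [hb, ← LatticeModule.mul_smul, mul_comm, LatticeModule.mul_smul]
    have h1 : y • X ≤ aa • X := by
      rw [comm1 y, comm1 aa]
      exact mm_smul_mono_right b h
    have h3 := hXpr.2 aa ⊥
    rw [sup_bot_eq] at h3
    have h2 : y ≤ colon L (aa • X) X := mm_le_colon h1
    rw [← h3] at h2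
    exact h2
  have hkey2 : y ^ t.card ≤ aa ⊔ ∏ X ∈ t, f X := ml_pow_card_le y aa f t key
  have hC : (∏ X ∈ t, f X) = ⊥ := by
    have h4 : (∏ X ∈ t, f X) • (⊤ : M) ≤ ⊥ := by
      rw [Finset.sup_id_eq_sSup] at htop
      have h5 : (∏ X ∈ t, f X) • sSup (↑t : Set M) ≤ ⊥ := by
        rw [LatticeModule.smul_sSup]
        refine iSup₂_le fun X hX => ?_
        have hXt : X ∈ t := hX
        have hle : (∏ Y ∈ t, f Y) ≤ f X := by
          rw [← Finset.mul_prod_erase t f hXt]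
          exact ml_mul_le_left _ _
        exact (mm_smul_mono_left hle X).trans (mm_colon_smul_le ⊥ X)
      exact ((mm_smul_mono_right _ htop)).trans h5
    have h6 : (∏ X ∈ t, f X) ≤ colon L ⊥ ⊤ := mm_le_colon h4
    rw [hfaith] at h6
    exact le_bot_iff.mp h6
  refine ⟨t.card + 1, Nat.succ_pos _, ?_⟩
  have hstep : y ^ (t.card + 1) ≤ y ^ t.card := by
    rw [pow_succ]; exact ml_mul_le_left _ _
  refine hstep.trans ?_
  rwa [hC, sup_bot_eq] at hkey2

/-! ### Existence of primes via Zorn -/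

lemma exists_prime_above (hcomp : IsCompactElement (⊤ : M)) (N : M) (hN : N < ⊤) :
    ∃ P : M, IsPrimeM L P ∧ N ≤ P := by
  set S : Set M := {P | N ≤ P ∧ P ≠ ⊤} with hS
  have hchainS : ∀ c ⊆ S, IsChain (· ≤ ·) c → ∀ y ∈ c, ∃ ub ∈ S, ∀ z ∈ c, z ≤ ub := by
    intro c hcS hchain y hy
    refine ⟨sSup c, ⟨(hcS hy).1.trans (le_sSup hy), ?_⟩, fun z hz => le_sSup hz⟩
    intro htop
    obtain ⟨P', hP'c, hP'⟩ :=
      (CompleteLattice.isCompactElement_iff_le_of_directed_sSup_le M ⊤).mp hcomp c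
        ⟨y, hy⟩ hchain.directedOn htop.ge
    exact (hcS hP'c).2 (top_le_iff.mp hP')
  obtain ⟨P, hNP, hPmax⟩ := zorn_le_nonempty₀ S hchainS N ⟨le_rfl, hN.ne⟩
  refine ⟨P, ⟨lt_top_iff_ne_top.mpr hPmax.1.2, ?_⟩, hNP⟩
  · intro b X hbX
    by_cases hXP : X ≤ P
    · left; exact hXP
    · right
      have hsup : P ⊔ X = ⊤ := by
        by_contra hne
        have hmem : P ⊔ X ∈ S := ⟨hPmax.1.1.trans le_sup_left, hne⟩
        have hle : P ⊔ X ≤ P := hPmax.2 hmem le_sup_left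
        exact hXP (le_sup_right.trans hle)
      have : b • (⊤ : M) = b • P ⊔ b • X := by rw [← hsup, mm_smul_sup]
      rw [this]
      exact sup_le (mm_smul_le_self b P) hbX

lemma exists_prime_avoid (hfaith : IsFaithful L M) (hmul : IsMultiplicationModule L M)
    (hPGM : IsPGModule L M) (hcomp : IsCompactElement (⊤ : M)) (N : M) (z : L)
    (hz : IsCompactElement z) (h : ∀ n : ℕ, 0 < n → ¬ (z ^ n) • (⊤ : M) ≤ N) :
    ∃ P : M, IsPrimeM L P ∧ N ≤ P ∧ ¬ z • (⊤ : M) ≤ P := by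
  set q : L := colon L N ⊤ with hq
  set S : Set L := {p | q ≤ p ∧ ∀ n : ℕ, 0 < n → ¬ z ^ n ≤ p} with hS
  have hqS : q ∈ S := by
    refine ⟨le_rfl, fun n hn hzn => h n hn ?_⟩
    exact (mm_smul_mono_left hzn ⊤).trans (mm_colon_smul_le N ⊤)
  have hchainS : ∀ c ⊆ S, IsChain (· ≤ ·) c → ∀ y ∈ c, ∃ ub ∈ S, ∀ w ∈ c, w ≤ ub := by
    intro c hcS hchain y hy
    refine ⟨sSup c, ⟨(hcS hy).1.trans (le_sSup hy), ?_⟩, fun w hw => le_sSup hw⟩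
    intro n hn hzn
    obtain ⟨p', hp'c, hp'⟩ :=
      (CompleteLattice.isCompactElement_iff_le_of_directed_sSup_le L (z ^ n)).mp
        (ml_pow_compact hz n hn) c ⟨y, hy⟩ hchain.directedOn hzn
    exact (hcS hp'c).2 n hn hp'
  obtain ⟨p, hqp, hpmax⟩ := zorn_le_nonempty₀ S hchainS q hqS
  have hprime : ∀ u v : L, u * v ≤ p → u ≤ p ∨ v ≤ p := by
      intro u v huv
      by_contra hcon
      push_neg at hcon
      have key : ∀ w : L, ¬ w ≤ p → ∃ m : ℕ, 0 < m ∧ z ^ m ≤ p ⊔ w := by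
        intro w hw
        by_contra hcc
        push_neg at hcc
        have hmem : p ⊔ w ∈ S := ⟨hpmax.1.1.trans le_sup_left, hcc⟩
        exact hw (le_sup_right.trans (hpmax.2 hmem le_sup_left))
      obtain ⟨m, hm, hzm⟩ := key u hcon.1
      obtain ⟨k, hk, hzk⟩ := key v hcon.2
      have hle : z ^ (m + k) ≤ p := by
        rw [pow_add]
        calc z ^ m * z ^ k ≤ (p ⊔ u) * (p ⊔ v) := ml_mul_le_mul hzm hzk
          _ ≤ p ⊔ u * v := ml_sup_mul_sup_le _ _ _
          _ ≤ p := sup_le le_rfl huv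
      exact hpmax.1.2 (m + k) (by omega) hle
  have hNle : N ≤ p • (⊤ : M) := by
    have hNq : N = q • (⊤ : M) := mm_eq_colon_smul hmul N
    rw [hNq]
    exact mm_smul_mono_left hqp ⊤
  have hzP : ¬ z • (⊤ : M) ≤ p • (⊤ : M) := by
    intro hzz
    obtain ⟨n, hn, hle⟩ := rcanc hfaith hmul hPGM hcomp z p hzz
    exact hpmax.1.2 n hn hle
  have hPlt : p • (⊤ : M) < ⊤ := by
    rw [lt_top_iff_ne_top]
    intro htop
    have h1 : (1 : L) • (⊤ : M) ≤ p • (⊤ : M) := by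
      rw [LatticeModule.one_smul, htop]
    obtain ⟨n, hn, hle⟩ := rcanc hfaith hmul hPGM hcomp 1 p h1
    rw [one_pow] at hle
    exact hpmax.1.2 1 one_pos (by rw [pow_one]; exact (ml_le_one z).trans hle)
  refine ⟨p • ⊤, ⟨hPlt, ?_⟩, hNle, hzP⟩
  intro c Y hcY
  obtain ⟨y, rfl⟩ := hmul Y
  have hcy : (c * y) • (⊤ : M) ≤ p • (⊤ : M) := by
    rw [LatticeModule.mul_smul]; exact hcY
  obtain ⟨n, hn, hle⟩ := rcanc hfaith hmul hPGM hcomp (c * y) p hcy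
  rw [mul_pow] at hle
  rcases hprime _ _ hle with h1 | h1
  · right
    exact mm_smul_mono_left (ml_pow_descent hprime n hn h1) ⊤
  · left
    exact mm_smul_mono_left (ml_pow_descent hprime n hn h1) ⊤

end ProofDev

theorem stmt19 {L : Type u} {M : Type v} [MultiplicativeLattice L] [LatticeModule L M]
    (hPG : IsPGLattice L) (hfaith : IsFaithful L M)
    (hmul : IsMultiplicationModule L M) (hPGM : IsPGModule L M)
    (hcomp : IsCompactElement (⊤ : M))
    (N : M) (hN : IsPseudoClassicalPrimary L N) :
    IsPrimeM L (mrad L N) := by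
  obtain ⟨hNtop, hpcp⟩ := hN
  obtain ⟨P₀, hP₀, hNP₀⟩ := exists_prime_above hcomp N hNtop
  refine ⟨lt_of_le_of_lt (sInf_le ⟨hP₀, hNP₀⟩) hP₀.1, ?_⟩
  intro a X haX
  by_cases hX : X ≤ mrad L N
  · left; exact hX
  by_cases ha : a • (⊤ : M) ≤ mrad L N
  · right; exact ha
  exfalso
  have getP : ∀ Y : M, ¬ Y ≤ mrad L N → ∃ P, IsPrimeM L P ∧ N ≤ P ∧ ¬ Y ≤ P := by
    intro Y hY
    by_contra hc
    push_neg at hc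
    exact hY (le_sInf fun P hP => hc P hP.1 hP.2)
  obtain ⟨P₁, hP₁, hNP₁, hXP₁⟩ := getP X hX
  obtain ⟨P₂, hP₂, hNP₂, haP₂⟩ := getP _ ha
  obtain ⟨x, rfl⟩ := hmul X
  have hxp₁ : ¬ x ≤ colon L P₁ ⊤ := fun hh => hXP₁ (mm_smul_of_le_colon hh)
  have hap₂ : ¬ a ≤ colon L P₂ ⊤ := fun hh => haP₂ (mm_smul_of_le_colon hh)
  have getc : ∀ w pp : L, ¬ w ≤ pp → ∃ c, IsCompactElement c ∧ c ≤ w ∧ ¬ c ≤ pp := by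
    intro w pp hw
    by_contra hc
    push_neg at hc
    refine hw ?_
    calc w = sSup {c : L | IsCompactElement c ∧ c ≤ w} :=
          MultiplicativeLattice.compactlyGenerated w
      _ ≤ pp := sSup_le fun c hc2 => hc c hc2.1 hc2.2
  obtain ⟨c, hc, hca, hcp₂⟩ := getc a (colon L P₂ ⊤) hap₂
  obtain ⟨d, hd, hdx, hdp₁⟩ := getc x (colon L P₁ ⊤) hxp₁
  have hcd : (c * d) • (⊤ : M) ≤ mrad L N := by
    have h1 : (c * d) • (⊤ : M) ≤ a • (x • (⊤ : M)) := by
      rw [← LatticeModule.mul_smul]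
      exact mm_smul_mono_left (ml_mul_le_mul hca hdx) ⊤
    exact h1.trans haX
  have hzn : ∃ n : ℕ, 0 < n ∧ ((c * d) ^ n) • (⊤ : M) ≤ N := by
    by_contra hcc
    push_neg at hcc
    obtain ⟨P, hP, hNP, havoid⟩ :=
      exists_prime_avoid hfaith hmul hPGM hcomp N (c * d)
        (MultiplicativeLattice.mul_compact _ _ hc hd) fun n hn => hcc n hn
    exact havoid (hcd.trans (sInf_le ⟨hP, hNP⟩))
  obtain ⟨n, hn, hcdn⟩ := hzn
  rw [mul_pow] at hcdn
  rcases hpcp (c ^ n) (d ^ n) ⊤ hcdn with h1 | h2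
  · have hcn : c ^ n ≤ colon L P₂ ⊤ := mm_le_colon (h1.trans hNP₂)
    exact hcp₂ (ml_pow_descent (mm_colon_prime hP₂) n hn hcn)
  · have hdn : d ^ n ≤ colon L P₁ ⊤ :=
      mm_le_colon (h2.trans (sInf_le ⟨hP₁, hNP₁⟩))
    exact hdp₁ (ml_pow_descent (mm_colon_prime hP₁) n hn hdn)
end
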